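/- Let G be a locally compact, Hausdorff, étale groupoid with non-compact unit space and let G̃ be its Alexandrov groupoid. Then the dynamic asymptotic dimension of G equals the dynamic asymptotic dimension of G̃. -/

import Mathlib

/-- A topological groupoid structure on a topological space `G`.  The range and source
maps land in the set of units (idempotents of `src`), composition `mul g h` is defined
when `src g = rng h`, and all structure maps are continuous. -/
structure TopGroupoid (G : Type*) [TopologicalSpace G] where
  src : G → G
  rng : G → G
  mul : (g h : G) → src g = rng h → G
  inv : G → G
  src_src : ∀ g, src (src g) = src g
  rng_src : ∀ g, rng (src g) = src g
  src_rng : ∀ g, src (rng g) = rng g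
  rng_rng : ∀ g, rng (rng g) = rng g
  src_mul : ∀ g h hgh, src (mul g h hgh) = src h
  rng_mul : ∀ g h hgh, rng (mul g h hgh) = rng g
  mul_assoc : ∀ g h k (hgh : src g = rng h) (hhk : src h = rng k)
      (h₁ : src (mul g h hgh) = rng k) (h₂ : src g = rng (mul h k hhk)),
      mul (mul g h hgh) k h₁ = mul g (mul h k hhk) h₂
  rng_mul_cancel : ∀ g (h : src (rng g) = rng g), mul (rng g) g h = g
  mul_src_cancel : ∀ g (h : src g = rng (src g)), mul g (src g) h = g
  src_inv : ∀ g, src (inv g) = rng g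
  rng_inv : ∀ g, rng (inv g) = src g
  inv_inv : ∀ g, inv (inv g) = g
  inv_mul_cancel : ∀ g (h : src (inv g) = rng g), mul (inv g) g h = src g
  mul_inv_cancel : ∀ g (h : src g = rng (inv g)), mul g (inv g) h = rng g
  continuous_src : Continuous src
  continuous_rng : Continuous rng
  continuous_inv : Continuous inv
  continuous_mul : Continuous fun p : {p : G × G // src p.1 = rng p.2} =>
    mul p.1.1 p.1.2 p.2

namespace TopGroupoid

variable {G : Type*} [TopologicalSpace G] (𝒢 : TopGroupoid G)

/-- The unit space `G⁰` of the groupoid. -/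
def units : Set G := {x | 𝒢.src x = x}

/-- A groupoid is principal if `g ↦ (r g, s g)` is injective. -/
def Principal : Prop := Function.Injective fun g => (𝒢.rng g, 𝒢.src g)

/-- A subset of `G` closed under inversion and composition. -/
def IsSubgroupoid (S : Set G) : Prop :=
  (∀ g ∈ S, 𝒢.inv g ∈ S) ∧
    ∀ g ∈ S, ∀ h ∈ S, ∀ hgh : 𝒢.src g = 𝒢.rng h, 𝒢.mul g h hgh ∈ S

/-- The subgroupoid generated by a subset. -/
def gen (X : Set G) : Set G := ⋂₀ {S | X ⊆ S ∧ 𝒢.IsSubgroupoid S}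

/-- A groupoid is étale if its range map is a local homeomorphism. -/
def Etale : Prop :=
  ∀ g : G, ∃ U : Set G, IsOpen U ∧ g ∈ U ∧ Set.InjOn 𝒢.rng U ∧
    ∀ V ⊆ U, IsOpen V → IsOpen (𝒢.rng '' V)

/-- Dynamic asymptotic dimension at most `d` (Guentner–Willett–Yu): for every open
precompact `V ⊆ G` there are open sets `U₀, …, U_d` in the unit space covering
`s(V) ∪ r(V)` such that each `⟨{g ∈ V : s g, r g ∈ U i}⟩` is precompact. -/
def DadLE (d : ℕ) : Prop :=
  ∀ V : Set G, IsOpen V → IsCompact (closure V) →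
    ∃ U : Fin (d + 1) → Set G,
      (∀ i, IsOpen (U i) ∧ U i ⊆ 𝒢.units) ∧
      (𝒢.src '' V ∪ 𝒢.rng '' V ⊆ ⋃ i, U i) ∧
      ∀ i, IsCompact (closure (𝒢.gen {g ∈ V | 𝒢.src g ∈ U i ∧ 𝒢.rng g ∈ U i}))

/-- Dynamic asymptotic dimension as an extended natural number. -/
noncomputable def dad : ℕ∞ :=
  sInf {m : ℕ∞ | ∃ d : ℕ, m = d ∧ 𝒢.DadLE d}

end TopGroupoid

variable {G : Type*} [TopologicalSpace G]

/-- The basis for the topology of the Alexandrov groupoid `G̃ = G ∪ {∞}`: the whole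
space, the open sets of `G`, and the open sets of the one-point compactification of
the unit space. -/
def alexBasis (𝒢 : TopGroupoid G) : Set (Set (Option G)) :=
  {Set.univ} ∪ {S | ∃ U : Set G, IsOpen U ∧ S = some '' U} ∪
    {S | ∃ K : Set G, K ⊆ 𝒢.units ∧ IsCompact K ∧
      S = insert none (some '' (𝒢.units \ K))}

/-- The topology of the Alexandrov groupoid. -/
def alexTop (𝒢 : TopGroupoid G) : TopologicalSpace (Option G) :=
  TopologicalSpace.generateFrom (alexBasis 𝒢)


/-! The new unit `∞` is algebraically isolated, so the subgroupoids of `G̃` are those of `G`,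
possibly with `∞` added. Given an open precompact `V ⊆ G`, it stays open precompact in `G̃`
and a cover of `G̃⁰` pulls back to `G⁰`; the generated subgroupoids have all their units in
the compact set `s(V̄) ∪ r(V̄)`, so their closures in `G̃` miss `∞` and are compact in `G`.
Conversely, for open precompact `V ⊆ G̃` the non-units of `V` are precompact in `G` with
endpoints in a compact `K ⊆ G⁰`. Covering a precompact open enlargement of them in `G` and
adding the neighbourhood `{∞} ∪ (G⁰ \ K)` of `∞` to every member of the cover gives a cover
of `G̃⁰`, whose generated subgroupoids lie in a precompact subgroupoid of `G` together with
the compact unit space `G̃⁰`. -/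

open Set Topology

namespace TopGroupoid

variable (𝒢 : TopGroupoid G)

theorem rng_eq_self {u : G} (hu : u ∈ 𝒢.units) : 𝒢.rng u = u := by
  rw [← hu]
  exact 𝒢.rng_src u

theorem mul_unit_right {g u : G} (hu : u ∈ 𝒢.units) (p : 𝒢.src g = 𝒢.rng u) :
    𝒢.mul g u p = g := by
  obtain rfl : u = 𝒢.src g := (𝒢.rng_eq_self hu).symm.trans p.symm
  exact 𝒢.mul_src_cancel g p

theorem mul_unit_left {u g : G} (hu : u ∈ 𝒢.units) (p : 𝒢.src u = 𝒢.rng g) :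
    𝒢.mul u g p = g := by
  obtain rfl : u = 𝒢.rng g := hu.symm.trans p
  exact 𝒢.rng_mul_cancel g p

theorem inv_eq_self {u : G} (hu : u ∈ 𝒢.units) : 𝒢.inv u = u :=
  calc 𝒢.inv u = 𝒢.mul (𝒢.inv u) u (𝒢.src_inv u) := (𝒢.mul_unit_right hu _).symm
    _ = 𝒢.src u := 𝒢.inv_mul_cancel u _
    _ = u := hu

theorem isCompact_src_image_union_rng_image {C : Set G} (hC : IsCompact C) :
    IsCompact (𝒢.src '' C ∪ 𝒢.rng '' C) :=
  (hC.image 𝒢.continuous_src).union (hC.image 𝒢.continuous_rng)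

theorem src_image_union_rng_image_subset_units (C : Set G) :
    𝒢.src '' C ∪ 𝒢.rng '' C ⊆ 𝒢.units := by
  rintro _ (⟨g, -, rfl⟩ | ⟨g, -, rfl⟩)
  exacts [𝒢.src_src g, 𝒢.src_rng g]

theorem isClosed_units [T2Space G] : IsClosed 𝒢.units :=
  isClosed_eq 𝒢.continuous_src continuous_id

theorem subset_gen (X : Set G) : X ⊆ 𝒢.gen X :=
  fun _ hg => mem_sInter.2 fun _ hS => hS.1 hg

theorem gen_subset {X S : Set G} (hXS : X ⊆ S) (hS : 𝒢.IsSubgroupoid S) : 𝒢.gen X ⊆ S :=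
  sInter_subset_of_mem ⟨hXS, hS⟩

theorem gen_isSubgroupoid (X : Set G) : 𝒢.IsSubgroupoid (𝒢.gen X) :=
  ⟨fun g hg => mem_sInter.2 fun S hS => hS.2.1 g (mem_sInter.1 hg S hS),
    fun g hg h hh hgh => mem_sInter.2 fun S hS =>
      hS.2.2 g (mem_sInter.1 hg S hS) h (mem_sInter.1 hh S hS) hgh⟩

theorem isSubgroupoid_setOf_src_rng_mem (K : Set G) :
    𝒢.IsSubgroupoid {g | 𝒢.src g ∈ K ∧ 𝒢.rng g ∈ K} := by
  refine ⟨fun g hg => ⟨?_, ?_⟩, fun g hg h hh hgh => ⟨?_, ?_⟩⟩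
  · rw [𝒢.src_inv]; exact hg.2
  · rw [𝒢.rng_inv]; exact hg.1
  · rw [𝒢.src_mul]; exact hh.1
  · rw [𝒢.rng_mul]; exact hg.2

theorem gen_inter_units_subset {X K : Set G} (hX : ∀ g ∈ X, 𝒢.src g ∈ K ∧ 𝒢.rng g ∈ K) :
    𝒢.gen X ∩ 𝒢.units ⊆ K := fun _ ⟨hg, hu⟩ =>
  hu ▸ (𝒢.gen_subset hX (𝒢.isSubgroupoid_setOf_src_rng_mem K) hg).1

variable {𝒢} in
theorem IsSubgroupoid.union_units {S : Set G} (hS : 𝒢.IsSubgroupoid S) :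
    𝒢.IsSubgroupoid (S ∪ 𝒢.units) := by
  refine ⟨?_, ?_⟩
  · rintro g (hg | hu)
    exacts [Or.inl (hS.1 g hg), Or.inr ((𝒢.inv_eq_self hu).symm ▸ hu)]
  · rintro g hg h (hh | hu) p
    · rcases hg with hg | hu
      · exact Or.inl (hS.2 g hg h hh p)
      · exact (𝒢.mul_unit_left hu p).symm ▸ Or.inl hh
    · exact (𝒢.mul_unit_right hu p).symm ▸ hg

theorem mem_of_some_mem_image_union_insert_none {x : G} {U K : Set G} (hxK : x ∈ K)
    (hx : some x ∈ some '' U ∪ insert none (some '' (𝒢.units \ K))) : x ∈ U := by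
  simp only [mem_union, mem_insert_iff, mem_image, Option.some_inj, reduceCtorEq,
    false_or, exists_eq_right] at hx
  exact hx.resolve_right fun h => h.2 hxK

theorem dad_eq_of_dadLE_iff {H : Type*} [TopologicalSpace H] {ℋ : TopGroupoid H}
    (h : ∀ d, 𝒢.DadLE d ↔ ℋ.DadLE d) : 𝒢.dad = ℋ.dad := by
  simp only [dad, h]

/-- The algebraic structure of `G̃ = G ∪ {∞}` on `Option G`, with `∞ = none`. -/
structure ExtendsByUnit [TopologicalSpace (Option G)] (𝒢' : TopGroupoid (Option G)) :
    Prop where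
  src_some : ∀ g : G, 𝒢'.src (some g) = some (𝒢.src g)
  src_none : 𝒢'.src none = none
  rng_some : ∀ g : G, 𝒢'.rng (some g) = some (𝒢.rng g)
  rng_none : 𝒢'.rng none = none
  inv_some : ∀ g : G, 𝒢'.inv (some g) = some (𝒢.inv g)
  inv_none : 𝒢'.inv none = none
  mul_some : ∀ (g h : G) (hgh : 𝒢.src g = 𝒢.rng h)
      (hgh' : 𝒢'.src (some g) = 𝒢'.rng (some h)),
    𝒢'.mul (some g) (some h) hgh' = some (𝒢.mul g h hgh)
  mul_none : ∀ hinf : 𝒢'.src none = 𝒢'.rng none, 𝒢'.mul none none hinf = none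

namespace ExtendsByUnit

variable {𝒢} [TopologicalSpace (Option G)] {𝒢' : TopGroupoid (Option G)}
  (hext : 𝒢.ExtendsByUnit 𝒢')
include hext

theorem src_some_eq_rng_some_iff {g h : G} :
    𝒢'.src (some g) = 𝒢'.rng (some h) ↔ 𝒢.src g = 𝒢.rng h := by
  rw [hext.src_some, hext.rng_some, Option.some_inj]

theorem units_eq : 𝒢'.units = insert none (some '' 𝒢.units) := by
  ext (_ | g)
  · simp [TopGroupoid.units, hext.src_none]
  · simp [TopGroupoid.units, hext.src_some]

theorem isSubgroupoid_preimage_some {S' : Set (Option G)} (hS' : 𝒢'.IsSubgroupoid S') :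
    𝒢.IsSubgroupoid (some ⁻¹' S') := by
  refine ⟨fun g hg => ?_, fun g hg h hh p => ?_⟩
  · rw [mem_preimage, ← hext.inv_some]
    exact hS'.1 _ hg
  · have p' := (hext.src_some_eq_rng_some_iff).2 p
    rw [mem_preimage, ← hext.mul_some g h p p']
    exact hS'.2 _ hg _ hh p'

theorem isSubgroupoid_insert_none_image {S : Set G} (hS : 𝒢.IsSubgroupoid S) :
    𝒢'.IsSubgroupoid (insert none (some '' S)) := by
  refine ⟨?_, ?_⟩
  · rintro _ (rfl | ⟨g, hg, rfl⟩)
    · rw [hext.inv_none]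
      exact mem_insert _ _
    · rw [hext.inv_some]
      exact mem_insert_of_mem _ (mem_image_of_mem _ (hS.1 g hg))
  · rintro _ (rfl | ⟨g, hg, rfl⟩) _ (rfl | ⟨h, hh, rfl⟩) p
    · rw [hext.mul_none]
      exact mem_insert _ _
    · simp [hext.src_none, hext.rng_some] at p
    · simp [hext.src_some, hext.rng_none] at p
    · have p' := (hext.src_some_eq_rng_some_iff).1 p
      rw [hext.mul_some g h p' p]
      exact mem_insert_of_mem _ (mem_image_of_mem _ (hS.2 g hg h hh p'))

theorem gen_subset_preimage_gen {X : Set G} {Y' : Set (Option G)} (hXY : some '' X ⊆ Y') :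
    𝒢.gen X ⊆ some ⁻¹' 𝒢'.gen Y' :=
  𝒢.gen_subset (image_subset_iff.1 (hXY.trans (𝒢'.subset_gen Y')))
    (hext.isSubgroupoid_preimage_some (𝒢'.gen_isSubgroupoid Y'))

theorem gen_subset_image_gen_union {V' : Set (Option G)} {K W U : Set G}
    (hV' : ∀ g ∈ some ⁻¹' V', g ∉ 𝒢.units → g ∈ W ∧ 𝒢.src g ∈ K ∧ 𝒢.rng g ∈ K) :
    𝒢'.gen {g' ∈ V' | 𝒢'.src g' ∈ some '' U ∪ insert none (some '' (𝒢.units \ K)) ∧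
        𝒢'.rng g' ∈ some '' U ∪ insert none (some '' (𝒢.units \ K))} ⊆
      some '' 𝒢.gen {g ∈ W | 𝒢.src g ∈ U ∧ 𝒢.rng g ∈ U} ∪ insert none (some '' 𝒢.units) := by
  set X := {g ∈ W | 𝒢.src g ∈ U ∧ 𝒢.rng g ∈ U}
  refine (𝒢'.gen_subset (S := insert none (some '' (𝒢.gen X ∪ 𝒢.units))) ?_
    (hext.isSubgroupoid_insert_none_image (𝒢.gen_isSubgroupoid X).union_units)).trans
    (by rw [image_union, union_insert])
  rintro (_ | g) ⟨hg, hs, hr⟩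
  · exact mem_insert _ _
  refine mem_insert_of_mem _ (mem_image_of_mem _ ?_)
  by_cases hgu : g ∈ 𝒢.units
  · exact Or.inr hgu
  obtain ⟨hgW, hsK, hrK⟩ := hV' g hg hgu
  rw [hext.src_some] at hs
  rw [hext.rng_some] at hr
  exact Or.inl (𝒢.subset_gen X ⟨hgW, 𝒢.mem_of_some_mem_image_union_insert_none hsK hs,
    𝒢.mem_of_some_mem_image_union_insert_none hrK hr⟩)

end ExtendsByUnit

end TopGroupoid

namespace Alexandrov

variable {𝒢 : TopGroupoid G} [inst : TopologicalSpace (Option G)] (hinst : inst = alexTop 𝒢)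
include hinst

theorem isOpen_image_some {U : Set G} (hU : IsOpen U) : IsOpen (some '' U) := by
  subst hinst
  exact TopologicalSpace.isOpen_generateFrom_of_mem (Or.inl (Or.inr ⟨U, hU, rfl⟩))

theorem isOpen_insert_none {K : Set G} (hKu : K ⊆ 𝒢.units) (hK : IsCompact K) :
    IsOpen (insert none (some '' (𝒢.units \ K))) := by
  subst hinst
  exact TopologicalSpace.isOpen_generateFrom_of_mem (Or.inr ⟨K, hKu, hK, rfl⟩)

theorem exists_isCompact_subset_of_isOpen {W : Set (Option G)} (hW : IsOpen W)
    (hn : none ∈ W) :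
    ∃ K : Set G, IsCompact K ∧ K ⊆ 𝒢.units ∧ insert none (some '' (𝒢.units \ K)) ⊆ W := by
  subst hinst
  induction hW with
  | basic S hS =>
    rcases hS with ((rfl | ⟨U, -, rfl⟩) | ⟨K, hKu, hK, rfl⟩)
    · exact ⟨∅, isCompact_empty, empty_subset _, subset_univ _⟩
    · simp at hn
    · exact ⟨K, hK, hKu, subset_rfl⟩
  | univ => exact ⟨∅, isCompact_empty, empty_subset _, subset_univ _⟩
  | inter S T _ _ ihS ihT =>
    obtain ⟨K₁, hK₁, hK₁u, h₁⟩ := ihS hn.1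
    obtain ⟨K₂, hK₂, hK₂u, h₂⟩ := ihT hn.2
    refine ⟨K₁ ∪ K₂, hK₁.union hK₂, union_subset hK₁u hK₂u, subset_inter ?_ ?_⟩
    · exact .trans (insert_subset_insert (image_mono (sdiff_subset_sdiff_right
        subset_union_left))) h₁
    · exact .trans (insert_subset_insert (image_mono (sdiff_subset_sdiff_right
        subset_union_right))) h₂
  | sUnion _ _ ih =>
    obtain ⟨S, hS, hnS⟩ := hn
    obtain ⟨K, hK, hKu, hsub⟩ := ih S hS hnS
    exact ⟨K, hK, hKu, hsub.trans (subset_sUnion_of_mem hS)⟩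

theorem isClosed_insert_none_image {C : Set G} (hC : IsClosed C) :
    IsClosed (insert none (some '' C)) := by
  rw [← isOpen_compl_iff]
  convert isOpen_image_some hinst hC.isOpen_compl
  ext (_ | g) <;> simp

theorem closure_image_some_subset (T : Set G) :
    closure (some '' T) ⊆ insert none (some '' closure T) :=
  closure_minimal ((image_mono subset_closure).trans (subset_insert _ _))
    (isClosed_insert_none_image hinst isClosed_closure)

variable [T2Space G] (hrd : IsOpen 𝒢.units)
include hrd

theorem continuous_some : Continuous (some : G → Option G) := by
  subst hinst
  rw [alexTop, continuous_generateFrom_iff]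
  rintro S ((rfl | ⟨U, hU, rfl⟩) | ⟨K, -, hK, rfl⟩)
  · exact isOpen_univ
  · rwa [preimage_image_eq U (Option.some_injective G)]
  · convert hrd.sdiff hK.isClosed
    ext g
    simp

theorem isOpenEmbedding_some : IsOpenEmbedding (some : G → Option G) :=
  .of_continuous_injective_isOpenMap (continuous_some hinst hrd) (Option.some_injective G)
    fun _ hU => isOpen_image_some hinst hU

theorem isCompact_closure_image_some {T : Set G} (hT : IsCompact (closure T)) :
    IsCompact (closure (some '' T)) :=
  ((hT.image (continuous_some hinst hrd)).insert none).of_isClosed_subset isClosed_closure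
    (closure_image_some_subset hinst T)

theorem isCompact_insert_none_image_units : IsCompact (insert none (some '' 𝒢.units)) := by
  refine isCompact_of_finite_subcover fun W hW hcov => ?_
  obtain ⟨i₀, hi₀⟩ := mem_iUnion.1 (hcov (mem_insert none _))
  obtain ⟨K, hK, hKu, hKW⟩ := exists_isCompact_subset_of_isOpen hinst (hW i₀) hi₀
  obtain ⟨t, ht⟩ := (hK.image (continuous_some hinst hrd)).elim_finite_subcover W hW
    ((image_mono hKu).trans ((subset_insert _ _).trans hcov))
  classical
  refine ⟨insert i₀ t, ?_⟩
  rintro _ (rfl | ⟨u, hu, rfl⟩)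
  · exact mem_biUnion (Finset.mem_insert_self _ _) hi₀
  · by_cases huK : u ∈ K
    · obtain ⟨i, hi, hx⟩ := mem_iUnion₂.1 (ht (mem_image_of_mem _ huK))
      exact mem_biUnion (Finset.mem_insert_of_mem hi) hx
    · exact mem_biUnion (Finset.mem_insert_self _ _)
        (hKW (mem_insert_of_mem _ (mem_image_of_mem _ ⟨hu, huK⟩)))

theorem isCompact_closure_of_image_some {T K : Set G} (hT : IsCompact (closure (some '' T)))
    (hK : IsCompact K) (hKu : K ⊆ 𝒢.units) (hTK : T ∩ 𝒢.units ⊆ K) :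
    IsCompact (closure T) := by
  have hdisj : Disjoint (insert none (some '' (𝒢.units \ K))) (some '' T) := by
    rw [disjoint_iff_inter_eq_empty, eq_empty_iff_forall_notMem]
    rintro _ ⟨rfl | ⟨u, hu, rfl⟩, ⟨g, hg, hgu⟩⟩
    · exact nomatch hgu
    · obtain rfl := Option.some_injective G hgu
      exact hu.2 (hTK ⟨hg, hu.1⟩)
  have hnone : none ∉ closure (some '' T) := fun hmem =>
    (hdisj.closure_right (isOpen_insert_none hinst hKu hK)).ne_of_mem (mem_insert _ _) hmem rfl
  have hrange : closure (some '' T) ⊆ range some := by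
    rintro (_ | g) hg
    exacts [absurd hg hnone, mem_range_self g]
  exact ((isOpenEmbedding_some hinst hrd).isInducing.isCompact_preimage' hT hrange
    ).of_isClosed_subset isClosed_closure
    (closure_subset_preimage_closure_image (continuous_some hinst hrd))

/-- `W` contains the non-units of `V'` and its units near `K`; the remaining units of `V'` lie in
the neighbourhood `{∞} ∪ (G⁰ \ K)` of `∞`. -/
theorem exists_isCompact_isOpen_of_isCompact_closure [LocallyCompactSpace G]
    {V' : Set (Option G)} (hV' : IsOpen V') (hV'c : IsCompact (closure V')) :
    ∃ K W : Set G, IsCompact K ∧ K ⊆ 𝒢.units ∧ IsOpen W ∧ IsCompact (closure W) ∧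
      (∀ g ∈ some ⁻¹' V', g ∉ 𝒢.units → g ∈ W ∧ 𝒢.src g ∈ K ∧ 𝒢.rng g ∈ K) ∧
      ∀ u ∈ some ⁻¹' V', u ∈ 𝒢.units → u ∈ K → u ∈ W := by
  set V := some ⁻¹' V'
  have hV : IsOpen V := hV'.preimage (continuous_some hinst hrd)
  set A := V \ 𝒢.units
  have hA : IsCompact (closure A) :=
    isCompact_closure_of_image_some hinst hrd
      (hV'c.of_isClosed_subset isClosed_closure
        (closure_mono ((image_mono sdiff_subset).trans (image_preimage_subset _ _))))
      isCompact_empty (empty_subset _) sdiff_inter_self.subset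
  set K := 𝒢.src '' closure A ∪ 𝒢.rng '' closure A
  have hK : IsCompact K := 𝒢.isCompact_src_image_union_rng_image hA
  obtain ⟨L, hL, hKL⟩ := exists_compact_superset hK
  refine ⟨K, A ∪ (V ∩ 𝒢.units ∩ interior L), hK, 𝒢.src_image_union_rng_image_subset_units _,
    (hV.sdiff 𝒢.isClosed_units).union ((hV.inter hrd).inter isOpen_interior), ?_,
    fun g hg hgu => ?_, fun u hu huu huK => Or.inr ⟨⟨hu, huu⟩, hKL huK⟩⟩
  · rw [closure_union]
    exact (hA.union hL).of_isClosed_subset (isClosed_closure.union isClosed_closure)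
      (union_subset_union_right _
        (closure_minimal (inter_subset_right.trans interior_subset) hL.isClosed))
  · have hgA : g ∈ A := ⟨hg, hgu⟩
    exact ⟨Or.inl hgA, Or.inl (mem_image_of_mem _ (subset_closure hgA)),
      Or.inr (mem_image_of_mem _ (subset_closure hgA))⟩

variable {𝒢' : TopGroupoid (Option G)} (hext : 𝒢.ExtendsByUnit 𝒢')
include hext

theorem dadLE_of_dadLE_alexandrov {d : ℕ} (h : 𝒢'.DadLE d) : 𝒢.DadLE d := by
  intro V hV hVc
  obtain ⟨U', hU', hcov, hgen⟩ := h (some '' V) (isOpen_image_some hinst hV)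
    (isCompact_closure_image_some hinst hrd hVc)
  refine ⟨fun i => some ⁻¹' U' i,
    fun i => ⟨(hU' i).1.preimage (continuous_some hinst hrd), fun u hu => ?_⟩, ?_, fun i => ?_⟩
  · simpa [hext.units_eq] using (hU' i).2 hu
  · rintro _ (⟨g, hg, rfl⟩ | ⟨g, hg, rfl⟩)
    · simpa [hext.src_some] using
        hcov (Or.inl (mem_image_of_mem 𝒢'.src (mem_image_of_mem some hg)))
    · simpa [hext.rng_some] using
        hcov (Or.inr (mem_image_of_mem 𝒢'.rng (mem_image_of_mem some hg)))
  · set X := {g ∈ V | 𝒢.src g ∈ some ⁻¹' U' i ∧ 𝒢.rng g ∈ some ⁻¹' U' i}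
    set K := 𝒢.src '' closure V ∪ 𝒢.rng '' closure V
    have hXK : ∀ g ∈ X, 𝒢.src g ∈ K ∧ 𝒢.rng g ∈ K := fun g hg =>
      ⟨Or.inl (mem_image_of_mem _ (subset_closure hg.1)),
        Or.inr (mem_image_of_mem _ (subset_closure hg.1))⟩
    have hXY : some '' X ⊆ {g' ∈ some '' V | 𝒢'.src g' ∈ U' i ∧ 𝒢'.rng g' ∈ U' i} := by
      rintro _ ⟨g, ⟨hg, hs, hr⟩, rfl⟩
      exact ⟨mem_image_of_mem _ hg, by rwa [hext.src_some], by rwa [hext.rng_some]⟩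
    exact isCompact_closure_of_image_some hinst hrd
      ((hgen i).of_isClosed_subset isClosed_closure
        (closure_mono (image_subset_iff.2 (hext.gen_subset_preimage_gen hXY))))
      (𝒢.isCompact_src_image_union_rng_image hVc)
      (𝒢.src_image_union_rng_image_subset_units _) (𝒢.gen_inter_units_subset hXK)

theorem dadLE_alexandrov_of_dadLE [LocallyCompactSpace G] {d : ℕ} (h : 𝒢.DadLE d) :
    𝒢'.DadLE d := by
  intro V' hV' hV'c
  obtain ⟨K, W, hK, hKu, hW, hWc, hnonunit, hunit⟩ :=
    exists_isCompact_isOpen_of_isCompact_closure hinst hrd hV' hV'c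
  obtain ⟨U, hU, hcov, hgen⟩ := h W hW hWc
  set Ω := insert none (some '' (𝒢.units \ K))
  refine ⟨fun i => some '' U i ∪ Ω, fun i => ⟨?_, ?_⟩, ?_, fun i => ?_⟩
  · exact (isOpen_image_some hinst (hU i).1).union (isOpen_insert_none hinst hKu hK)
  · rw [hext.units_eq]
    exact union_subset ((image_mono (hU i).2).trans (subset_insert _ _))
      (insert_subset_insert (image_mono sdiff_subset))
  · have hends : ∀ g ∈ some ⁻¹' V', ∀ x, (x = 𝒢.src g ∨ x = 𝒢.rng g) →
        some x ∈ ⋃ i, (some '' U i ∪ Ω) := by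
      intro g hg x hx
      by_cases hgW : g ∈ W
      · obtain ⟨i, hi⟩ : ∃ i, x ∈ U i := by
          refine mem_iUnion.1 (hcov ?_)
          rcases hx with rfl | rfl
          exacts [Or.inl (mem_image_of_mem _ hgW), Or.inr (mem_image_of_mem _ hgW)]
        exact mem_iUnion.2 ⟨i, Or.inl (mem_image_of_mem _ hi)⟩
      · have hgu : g ∈ 𝒢.units := not_not.1 fun hgu => hgW (hnonunit g hg hgu).1
        obtain rfl : x = g := by
          rcases hx with rfl | rfl
          exacts [hgu, 𝒢.rng_eq_self hgu]
        exact mem_iUnion.2 ⟨0, Or.inr (mem_insert_of_mem _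
          (mem_image_of_mem _ ⟨hgu, fun hgK => hgW (hunit x hg hgu hgK)⟩))⟩
    have hnone : none ∈ ⋃ i, (some '' U i ∪ Ω) := mem_iUnion.2 ⟨0, Or.inr (mem_insert _ _)⟩
    rintro _ (⟨_ | g, hg, rfl⟩ | ⟨_ | g, hg, rfl⟩)
    · rwa [hext.src_none]
    · rw [hext.src_some]
      exact hends g hg _ (Or.inl rfl)
    · rwa [hext.rng_none]
    · rw [hext.rng_some]
      exact hends g hg _ (Or.inr rfl)
  · refine ((isCompact_closure_image_some hinst hrd (hgen i)).union
      (isCompact_insert_none_image_units hinst hrd)).of_isClosed_subset isClosed_closure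
      ((closure_mono (hext.gen_subset_image_gen_union hnonunit)).trans ?_)
    rw [closure_union, (isClosed_insert_none_image hinst 𝒢.isClosed_units).closure_eq]

end Alexandrov

theorem stmt_16_general {G : Type*} [TopologicalSpace G] [T2Space G] [LocallyCompactSpace G]
    (𝒢 : TopGroupoid G) (hrd : IsOpen 𝒢.units)
    [inst : TopologicalSpace (Option G)] (hinst : inst = alexTop 𝒢)
    (𝒢' : TopGroupoid (Option G))
    (hsrc : ∀ g : G, 𝒢'.src (some g) = some (𝒢.src g)) (hsrc' : 𝒢'.src none = none)
    (hrng : ∀ g : G, 𝒢'.rng (some g) = some (𝒢.rng g)) (hrng' : 𝒢'.rng none = none)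
    (hinv : ∀ g : G, 𝒢'.inv (some g) = some (𝒢.inv g)) (hinv' : 𝒢'.inv none = none)
    (hmul : ∀ (g h : G) (hgh : 𝒢.src g = 𝒢.rng h)
        (hgh' : 𝒢'.src (some g) = 𝒢'.rng (some h)),
      𝒢'.mul (some g) (some h) hgh' = some (𝒢.mul g h hgh))
    (hmul' : ∀ hinf : 𝒢'.src none = 𝒢'.rng none, 𝒢'.mul none none hinf = none) :
    𝒢.dad = 𝒢'.dad := by
  have hext : 𝒢.ExtendsByUnit 𝒢' := ⟨hsrc, hsrc', hrng, hrng', hinv, hinv', hmul, hmul'⟩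
  exact 𝒢.dad_eq_of_dadLE_iff fun _ =>
    ⟨Alexandrov.dadLE_alexandrov_of_dadLE hinst hrd hext,
      Alexandrov.dadLE_of_dadLE_alexandrov hinst hrd hext⟩

/-- for a locally compact Hausdorff étale groupoid `G` with non-compact
unit space, the dynamic asymptotic dimension of `G` equals that of its Alexandrov
groupoid `G̃`. -/
theorem stmt_16 {G : Type*} [TopologicalSpace G] [T2Space G] [LocallyCompactSpace G]
    (𝒢 : TopGroupoid G) (hrd : IsOpen 𝒢.units) (hnc : ¬ IsCompact 𝒢.units)
    (het : 𝒢.Etale)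
    [inst : TopologicalSpace (Option G)] (hinst : inst = alexTop 𝒢)
    (𝒢' : TopGroupoid (Option G))
    (hsrc : ∀ g : G, 𝒢'.src (some g) = some (𝒢.src g)) (hsrc' : 𝒢'.src none = none)
    (hrng : ∀ g : G, 𝒢'.rng (some g) = some (𝒢.rng g)) (hrng' : 𝒢'.rng none = none)
    (hinv : ∀ g : G, 𝒢'.inv (some g) = some (𝒢.inv g)) (hinv' : 𝒢'.inv none = none)
    (hmul : ∀ (g h : G) (hgh : 𝒢.src g = 𝒢.rng h)
        (hgh' : 𝒢'.src (some g) = 𝒢'.rng (some h)),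
      𝒢'.mul (some g) (some h) hgh' = some (𝒢.mul g h hgh))
    (hmul' : ∀ hinf : 𝒢'.src none = 𝒢'.rng none, 𝒢'.mul none none hinf = none) :
    𝒢.dad = 𝒢'.dad :=
  stmt_16_general 𝒢 hrd (inst := inst) hinst 𝒢' hsrc hsrc' hrng hrng' hinv hinv' hmul hmul'
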